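/- arXiv:0802.3098 — 2 statements merged into one kernel-verified Lean document; each statement's English description precedes it below -/
import Mathlib

section
/- Let V be a finite-dimensional vector space over ℚ equipped with an alternating bilinear form ⟨·,·⟩ : V × V → ℚ. Let e₁, …, e_μ (μ ≥ 1) be vectors spanning V, and for each i let s_i : V → V be the transvection s_i(x) = x − ⟨x, e_i⟩ e_i (a linear automorphism of V, since ⟨e_i, e_i⟩ = 0). Assume the graph on {1, …, μ} in which i and j are adjacent if and only if ⟨e_i, e_j⟩ ≠ 0 is connected. Then for every δ ∈ V such that the linear functional x ↦ ⟨δ, x⟩ is not identically zero on V, the orbit of δ under the subgroup of GL(V) generated by s₁, …, s_μ spans V as a ℚ-vector space. -/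
/-- The linear-algebraic core of Proposition 1(2): if the Dynkin diagram of the
vanishing cycles `e i` is connected, the `e i` span `V`, and `δ` pairs nontrivially
with `V` under the alternating intersection form `B`, then the orbit of `δ` under
the group generated by the Picard–Lefschetz transvections `s i` spans `V`. -/
theorem orbit_of_transvections_spans
    (V : Type*) [AddCommGroup V] [Module ℚ V] [FiniteDimensional ℚ V]
    (B : V →ₗ[ℚ] V →ₗ[ℚ] ℚ) (hAlt : ∀ x : V, B x x = 0)
    (μ : ℕ) (hμ : 1 ≤ μ) (e : Fin μ → V)
    (hspan : Submodule.span ℚ (Set.range e) = ⊤)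
    (s : Fin μ → (V ≃ₗ[ℚ] V))
    (hs : ∀ i (x : V), s i x = x - B x (e i) • e i)
    (hconn : (SimpleGraph.fromRel (fun i j : Fin μ => B (e i) (e j) ≠ 0)).Connected)
    (δ : V) (hδ : ∃ x : V, B δ x ≠ 0) :
    Submodule.span ℚ {v : V | ∃ g ∈ Subgroup.closure (Set.range s), g δ = v} = ⊤ := by
  set G := SimpleGraph.fromRel (fun i j : Fin μ => B (e i) (e j) ≠ 0) with hG
  set O : Set V := {v : V | ∃ g ∈ Subgroup.closure (Set.range s), g δ = v} with hO
  set W := Submodule.span ℚ O with hW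
  have hδO : δ ∈ O := ⟨1, Subgroup.one_mem _, rfl⟩
  have hOW : ∀ i, ∀ v ∈ O, (s i) v ∈ O := by
    rintro i v ⟨g, hg, rfl⟩
    exact ⟨s i * g, Subgroup.mul_mem _ (Subgroup.subset_closure ⟨i, rfl⟩) hg, rfl⟩
  have hWs : ∀ i, ∀ w ∈ W, (s i) w ∈ W := by
    intro i w hw
    induction hw using Submodule.span_induction with
    | mem x hx => exact Submodule.subset_span (hOW i x hx)
    | zero => simpa using Submodule.zero_mem W
    | add x y hx hy ihx ihy => simpa [map_add] using Submodule.add_mem W ihx ihy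
    | smul a x hx ih => simpa [map_smul] using Submodule.smul_mem W a ih
  have key : ∀ i, ∀ w ∈ W, B w (e i) • e i ∈ W := by
    intro i w hw
    have h1 := hWs i w hw
    rw [hs] at h1
    have h2 := Submodule.sub_mem W hw h1
    simpa using h2
  have heW : ∀ i, (∃ w ∈ W, B w (e i) ≠ 0) → e i ∈ W := by
    rintro i ⟨w, hw, hne⟩
    have h := key i w hw
    have heq : e i = (B w (e i))⁻¹ • (B w (e i) • e i) := by
      rw [smul_smul, inv_mul_cancel₀ hne, one_smul]
    rw [heq]; exact Submodule.smul_mem _ _ h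
  have hanti : ∀ a b : V, B b a = - B a b := by
    intro a b
    have h := hAlt (a + b)
    simp [map_add, hAlt] at h
    linarith
  obtain ⟨x, hx⟩ := hδ
  have hj : ∃ j, B δ (e j) ≠ 0 := by
    by_contra h
    push_neg at h
    have hall : ∀ y ∈ Submodule.span ℚ (Set.range e), B δ y = 0 := by
      intro y hy
      induction hy using Submodule.span_induction with
      | mem z hz => obtain ⟨i, rfl⟩ := hz; exact h i
      | zero => simp
      | add y z _ _ ihy ihz => simp [map_add, ihy, ihz]
      | smul a y _ ih => simp [map_smul, ih]
    exact hx (hall x (by rw [hspan]; trivial))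
  have step : ∀ i k, G.Adj i k → e i ∈ W → e k ∈ W := by
    intro i k hadj hi
    rw [hG, SimpleGraph.fromRel_adj] at hadj
    obtain ⟨hne, h | h⟩ := hadj
    · exact heW k ⟨e i, hi, h⟩
    · refine heW k ⟨e i, hi, ?_⟩
      rw [hanti (e k) (e i)]
      exact neg_ne_zero.mpr h
  have walkW : ∀ {i k : Fin μ} (w : G.Walk i k), e i ∈ W → e k ∈ W := by
    intro i k w
    induction w with
    | nil => exact id
    | cons h p ih => intro hi; exact ih (step _ _ h hi)
  obtain ⟨j, hjne⟩ := hj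
  have hjW : e j ∈ W := heW j ⟨δ, Submodule.subset_span hδO, hjne⟩
  have hall : ∀ i, e i ∈ W := by
    intro i
    obtain ⟨w⟩ := hconn j i
    exact walkW w hjW
  have hle : Submodule.span ℚ (Set.range e) ≤ W :=
    Submodule.span_le.mpr (by rintro _ ⟨i, rfl⟩; exact hall i)
  exact eq_top_iff.mpr (hspan ▸ hle)
end

section
/- Let t₀ ∈ ℂ and let H₁, H₂ : ℂ × ℂ → ℂ be holomorphic on a neighborhood of (0, t₀) with H₁(0, t) = t and H₂(0, t) = t for all t near t₀. Set A_i(t) = ∂H_i/∂ε (0, t) for i = 1, 2. Suppose G₁, G₂ are holomorphic on a neighborhood of (0, t₀) and are local inverses, i.e. H_i(ε, G_i(ε, t)) = t and G_i(ε, H_i(ε, t)) = t for all (ε, t) near (0, t₀). Define the commutator K(ε, t) = H₁(ε, H₂(ε, G₁(ε, G₂(ε, t)))) for (ε, t) near (0, t₀). Then for all t near t₀: K(0, t) = t, ∂K/∂ε (0, t) = 0, and ∂²K/∂ε² (0, t) = 2 (A₁'(t) A₂(t) − A₂'(t) A₁(t)), where A_i' denotes the derivative of A_i with respect to t. -/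
/-!
Write `M_k F` for the `k`-th `ε`-derivative at `ε = 0` of a family `F (ε, ·)` with `F (0, ·) = id`,
and compose families fiberwise. The second-order chain rule along `ε ↦ (ε, G (ε, t))`, together
with the symmetry of the mixed second derivative, gives `M₁ (F ∘ G) = M₁ F + M₁ G` and
`M₂ (F ∘ G) = M₂ F + 2 (M₁ F)' M₁ G + M₂ G`. Applied to `H ∘ G = id` this yields `M₁ G = -M₁ H`
and `M₂ G = 2 (M₁ H)' M₁ H - M₂ H`. Expanding the commutator `H₁ ∘ H₂ ∘ G₁ ∘ G₂` with these rules,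
the first-order terms cancel and only the cross terms `2 (A₁' A₂ - A₂' A₁)` survive at second order.
-/

open Filter Topology

noncomputable section PartialDerivatives

variable {𝕜 : Type*} [NontriviallyNormedField 𝕜] {F : 𝕜 × 𝕜 → 𝕜}

def partialFst (F : 𝕜 × 𝕜 → 𝕜) (p : 𝕜 × 𝕜) : 𝕜 := fderiv 𝕜 F p (1, 0)

def partialSnd (F : 𝕜 × 𝕜 → 𝕜) (p : 𝕜 × 𝕜) : 𝕜 := fderiv 𝕜 F p (0, 1)

theorem hasDerivAt_comp_prodMk {f g : 𝕜 → 𝕜} {a b x : 𝕜}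
    (hF : DifferentiableAt 𝕜 F (f x, g x)) (hf : HasDerivAt f a x) (hg : HasDerivAt g b x) :
    HasDerivAt (fun z => F (f z, g z))
      (a * partialFst F (f x, g x) + b * partialSnd F (f x, g x)) x := by
  have hab : (a, b) = a • ((1 : 𝕜), (0 : 𝕜)) + b • ((0 : 𝕜), (1 : 𝕜)) := by simp
  have h := hF.hasFDerivAt.comp_hasDerivAt x (hf.prodMk hg)
  rwa [hab, map_add, map_smul, map_smul] at h

theorem hasDerivAt_comp_graph {s : 𝕜 → 𝕜} {d x : 𝕜}
    (hF : DifferentiableAt 𝕜 F (x, s x)) (hs : HasDerivAt s d x) :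
    HasDerivAt (fun ε => F (ε, s ε)) (partialFst F (x, s x) + d * partialSnd F (x, s x)) x := by
  simpa using hasDerivAt_comp_prodMk hF (hasDerivAt_id' x) hs

theorem partialFst_eq_deriv {a b : 𝕜} (hF : DifferentiableAt 𝕜 F (a, b)) :
    partialFst F (a, b) = deriv (fun ε => F (ε, b)) a := by
  simpa using (hasDerivAt_comp_prodMk hF (hasDerivAt_id' a) (hasDerivAt_const a b)).deriv.symm

theorem partialSnd_eq_deriv {a b : 𝕜} (hF : DifferentiableAt 𝕜 F (a, b)) :
    partialSnd F (a, b) = deriv (fun y => F (a, y)) b := by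
  simpa using (hasDerivAt_comp_prodMk hF (hasDerivAt_const b a) (hasDerivAt_id' b)).deriv.symm

variable [CompleteSpace 𝕜]

theorem AnalyticAt.partialFst {p : 𝕜 × 𝕜} (hF : AnalyticAt 𝕜 F p) :
    AnalyticAt 𝕜 (partialFst F) p :=
  ((ContinuousLinearMap.apply 𝕜 𝕜 ((1 : 𝕜), (0 : 𝕜))).analyticAt _).comp hF.fderiv

theorem AnalyticAt.partialSnd {p : 𝕜 × 𝕜} (hF : AnalyticAt 𝕜 F p) :
    AnalyticAt 𝕜 (partialSnd F) p :=
  ((ContinuousLinearMap.apply 𝕜 𝕜 ((0 : 𝕜), (1 : 𝕜))).analyticAt _).comp hF.fderiv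

theorem partialFst_partialSnd_comm {p : 𝕜 × 𝕜} (hF : AnalyticAt 𝕜 F p) :
    partialFst (partialSnd F) p = partialSnd (partialFst F) p := by
  have hF₂ (v w : 𝕜 × 𝕜) :
      fderiv 𝕜 (fun q => fderiv 𝕜 F q v) p w = fderiv 𝕜 (fderiv 𝕜 F) p w v := by
    rw [fderiv_clm_apply hF.fderiv.differentiableAt (differentiableAt_const v)]
    simp
  change fderiv 𝕜 (fun q => fderiv 𝕜 F q (0, 1)) p (1, 0)
    = fderiv 𝕜 (fun q => fderiv 𝕜 F q (1, 0)) p (0, 1)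
  rw [hF₂, hF₂]
  exact hF.contDiffAt.isSymmSndFDerivAt_of_omega.eq _ _

theorem iteratedDeriv_two_comp_graph {s : 𝕜 → 𝕜} {x : 𝕜}
    (hF : AnalyticAt 𝕜 F (x, s x)) (hs : AnalyticAt 𝕜 s x) :
    iteratedDeriv 2 (fun ε => F (ε, s ε)) x =
      partialFst (partialFst F) (x, s x)
        + 2 * deriv s x * partialSnd (partialFst F) (x, s x)
        + deriv s x ^ 2 * partialSnd (partialSnd F) (x, s x)
        + iteratedDeriv 2 s x * partialSnd F (x, s x) := by
  have hgraph : Tendsto (fun ε => (ε, s ε)) (𝓝 x) (𝓝 (x, s x)) :=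
    continuousAt_id.prodMk hs.continuousAt
  have hderiv : deriv (fun ε => F (ε, s ε)) =ᶠ[𝓝 x]
      fun ε => partialFst F (ε, s ε) + deriv s ε * partialSnd F (ε, s ε) := by
    filter_upwards [hgraph.eventually hF.eventually_analyticAt, hs.eventually_analyticAt]
      with ε hFε hsε
    exact (hasDerivAt_comp_graph hFε.differentiableAt hsε.differentiableAt.hasDerivAt).deriv
  have hs' := hs.differentiableAt.hasDerivAt
  have h₁ := hasDerivAt_comp_graph hF.partialFst.differentiableAt hs'
  have h₂ := hasDerivAt_comp_graph hF.partialSnd.differentiableAt hs'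
  have hs'' := hs.deriv.differentiableAt.hasDerivAt
  rw [iteratedDeriv_succ, iteratedDeriv_one, iteratedDeriv_succ, iteratedDeriv_one,
    hderiv.deriv_eq, (h₁.fun_add (hs''.fun_mul h₂)).deriv, partialFst_partialSnd_comm hF]
  ring

end PartialDerivatives

noncomputable section Deformations

variable {𝕜 : Type*} [NontriviallyNormedField 𝕜] {F G H : 𝕜 × 𝕜 → 𝕜} {y τ : 𝕜}

/-- `paramDeriv k F = k! • M_k` for the Melnikov functions `M_k` of the family
`F (ε, t) = t + ε M₁(t) + ε² M₂(t) + ⋯`. -/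
def paramDeriv (k : ℕ) (F : 𝕜 × 𝕜 → 𝕜) (y : 𝕜) : 𝕜 :=
  iteratedDeriv k (fun ε => F (ε, y)) 0

theorem paramDeriv_one (F : 𝕜 × 𝕜 → 𝕜) (y : 𝕜) :
    paramDeriv 1 F y = deriv (fun ε => F (ε, y)) 0 := by
  rw [paramDeriv, iteratedDeriv_one]

theorem paramDeriv_eq_zero_of_eventually_eq {k : ℕ} (hk : k ≠ 0) {c : 𝕜}
    (h : ∀ᶠ ε in 𝓝 0, F (ε, y) = c) : paramDeriv k F y = 0 := by
  rw [paramDeriv, EventuallyEq.iteratedDeriv_eq k h, iteratedDeriv_const, if_neg hk]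

structure IsDeformationOfId (F : 𝕜 × 𝕜 → 𝕜) (τ : 𝕜) : Prop where
  analyticAt : AnalyticAt 𝕜 F (0, τ)
  eventuallyEq_id : (fun y => F (0, y)) =ᶠ[𝓝 τ] id

def fiberwiseComp (F G : 𝕜 × 𝕜 → 𝕜) (p : 𝕜 × 𝕜) : 𝕜 := F (p.1, G p)

namespace IsDeformationOfId

theorem apply_zero (hF : IsDeformationOfId F τ) : F (0, τ) = τ :=
  hF.eventuallyEq_id.eq_of_nhds

theorem comp (hF : IsDeformationOfId F τ) (hG : IsDeformationOfId G τ) :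
    IsDeformationOfId (fiberwiseComp F G) τ where
  analyticAt := by
    have hF' : AnalyticAt 𝕜 F (((0 : 𝕜), τ).1, G (0, τ)) := by
      rw [hG.apply_zero]; exact hF.analyticAt
    exact hF'.comp₂ analyticAt_fst hG.analyticAt
  eventuallyEq_id := by
    filter_upwards [hF.eventuallyEq_id, hG.eventuallyEq_id] with y hFy hGy
    simp_all [fiberwiseComp]

theorem of_leftInverse (hH : IsDeformationOfId H τ)
    (hG : AnalyticAt 𝕜 G (0, τ)) (hinv : ∀ᶠ y in 𝓝 τ, G (0, H (0, y)) = y) :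
    IsDeformationOfId G τ where
  analyticAt := hG
  eventuallyEq_id := by
    filter_upwards [hH.eventuallyEq_id, hinv] with y hHy hy
    simp_all

end IsDeformationOfId

theorem paramDeriv_fiberwiseComp_eq_zero_of_inverse {k : ℕ} (hk : k ≠ 0)
    (hinv : ∀ᶠ p in 𝓝 ((0 : 𝕜), τ), H (p.1, G p) = p.2) :
    paramDeriv k (fiberwiseComp H G) τ = 0 :=
  paramDeriv_eq_zero_of_eventually_eq hk (hinv.curry_nhds.mono fun _ h => h.self_of_nhds)

variable [CompleteSpace 𝕜]

theorem partialSnd_partialFst_eq_deriv_paramDeriv_one (hF : AnalyticAt 𝕜 F (0, y)) :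
    partialSnd (partialFst F) (0, y) = deriv (paramDeriv 1 F) y := by
  rw [partialSnd_eq_deriv hF.partialFst.differentiableAt]
  refine EventuallyEq.deriv_eq ?_
  filter_upwards [hF.eventually_analyticAt.curry_nhds.self_of_nhds] with z hz
  rw [partialFst_eq_deriv hz.differentiableAt, paramDeriv_one]

theorem partialFst_partialFst_eq_paramDeriv_two (hF : AnalyticAt 𝕜 F (0, y)) :
    partialFst (partialFst F) (0, y) = paramDeriv 2 F y := by
  rw [partialFst_eq_deriv hF.partialFst.differentiableAt, paramDeriv, iteratedDeriv_succ,
    iteratedDeriv_one]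
  refine EventuallyEq.deriv_eq ?_
  filter_upwards [hF.eventually_analyticAt.curry_nhds.mono fun _ h => h.self_of_nhds] with ε hε
  exact partialFst_eq_deriv hε.differentiableAt

namespace IsDeformationOfId

theorem eventually (hF : IsDeformationOfId F τ) : ∀ᶠ y in 𝓝 τ, IsDeformationOfId F y := by
  filter_upwards [hF.analyticAt.eventually_analyticAt.curry_nhds.self_of_nhds,
    hF.eventuallyEq_id.eventuallyEq_nhds] with y hy hy' using ⟨hy, hy'⟩

theorem partialSnd_eventuallyEq_one (hF : IsDeformationOfId F τ) :
    (fun y => partialSnd F (0, y)) =ᶠ[𝓝 τ] fun _ => 1 := by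
  filter_upwards [hF.eventually] with y hy
  rw [partialSnd_eq_deriv hy.analyticAt.differentiableAt, hy.eventuallyEq_id.deriv_eq, deriv_id]

theorem partialSnd_partialSnd_eq_zero (hF : IsDeformationOfId F τ) :
    partialSnd (partialSnd F) (0, τ) = 0 := by
  rw [partialSnd_eq_deriv hF.analyticAt.partialSnd.differentiableAt,
    hF.partialSnd_eventuallyEq_one.deriv_eq, deriv_const]

theorem paramDeriv_one_comp (hF : IsDeformationOfId F τ) (hG : IsDeformationOfId G τ) :
    paramDeriv 1 (fiberwiseComp F G) τ = paramDeriv 1 F τ + paramDeriv 1 G τ := by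
  have hs : AnalyticAt 𝕜 (fun ε => G (ε, τ)) 0 :=
    hG.analyticAt.comp₂ analyticAt_id analyticAt_const
  have hF' : AnalyticAt 𝕜 F (0, G (0, τ)) := by rw [hG.apply_zero]; exact hF.analyticAt
  have h := (hasDerivAt_comp_graph hF'.differentiableAt hs.differentiableAt.hasDerivAt).deriv
  rw [hG.apply_zero, partialFst_eq_deriv hF.analyticAt.differentiableAt,
    hF.partialSnd_eventuallyEq_one.eq_of_nhds, mul_one] at h
  simp only [paramDeriv_one]
  exact h

theorem paramDeriv_two_comp (hF : IsDeformationOfId F τ) (hG : IsDeformationOfId G τ) :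
    paramDeriv 2 (fiberwiseComp F G) τ =
      paramDeriv 2 F τ + 2 * deriv (paramDeriv 1 F) τ * paramDeriv 1 G τ + paramDeriv 2 G τ := by
  have hs : AnalyticAt 𝕜 (fun ε => G (ε, τ)) 0 :=
    hG.analyticAt.comp₂ analyticAt_id analyticAt_const
  have hF' : AnalyticAt 𝕜 F (0, G (0, τ)) := by rw [hG.apply_zero]; exact hF.analyticAt
  have h := iteratedDeriv_two_comp_graph hF' hs
  rw [hG.apply_zero, partialFst_partialFst_eq_paramDeriv_two hF.analyticAt,
    partialSnd_partialFst_eq_deriv_paramDeriv_one hF.analyticAt, hF.partialSnd_partialSnd_eq_zero,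
    hF.partialSnd_eventuallyEq_one.eq_of_nhds, ← paramDeriv_one] at h
  change iteratedDeriv 2 (fun ε => F (ε, G (ε, τ))) 0 = _
  rw [h]
  simp only [paramDeriv]
  ring

theorem paramDeriv_one_eq_neg_of_inverse (hH : IsDeformationOfId H τ)
    (hG : IsDeformationOfId G τ) (hinv : ∀ᶠ p in 𝓝 ((0 : 𝕜), τ), H (p.1, G p) = p.2) :
    paramDeriv 1 G τ = -paramDeriv 1 H τ := by
  have h := hH.paramDeriv_one_comp hG
  rw [paramDeriv_fiberwiseComp_eq_zero_of_inverse one_ne_zero hinv] at h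
  linear_combination -h

theorem deriv_paramDeriv_one_eq_neg_of_inverse (hH : IsDeformationOfId H τ)
    (hG : IsDeformationOfId G τ) (hinv : ∀ᶠ p in 𝓝 ((0 : 𝕜), τ), H (p.1, G p) = p.2) :
    deriv (paramDeriv 1 G) τ = -deriv (paramDeriv 1 H) τ := by
  have h : paramDeriv 1 G =ᶠ[𝓝 τ] -paramDeriv 1 H := by
    filter_upwards [hH.eventually, hG.eventually, hinv.eventually_nhds.curry_nhds.self_of_nhds]
      with y hHy hGy hinvy
    exact hHy.paramDeriv_one_eq_neg_of_inverse hGy hinvy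
  rw [h.deriv_eq, deriv.neg]

theorem paramDeriv_two_eq_of_inverse (hH : IsDeformationOfId H τ)
    (hG : IsDeformationOfId G τ) (hinv : ∀ᶠ p in 𝓝 ((0 : 𝕜), τ), H (p.1, G p) = p.2) :
    paramDeriv 2 G τ = 2 * deriv (paramDeriv 1 H) τ * paramDeriv 1 H τ - paramDeriv 2 H τ := by
  have h := hH.paramDeriv_two_comp hG
  rw [paramDeriv_fiberwiseComp_eq_zero_of_inverse two_ne_zero hinv,
    hH.paramDeriv_one_eq_neg_of_inverse hG hinv] at h
  linear_combination -h

theorem eventually_of_inverse (hH : IsDeformationOfId H τ) (hG : AnalyticAt 𝕜 G (0, τ))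
    (hinv : ∀ᶠ p in 𝓝 ((0 : 𝕜), τ), H (p.1, G p) = p.2 ∧ G (p.1, H p) = p.2) :
    ∀ᶠ y in 𝓝 τ, IsDeformationOfId H y ∧ IsDeformationOfId G y ∧
      ∀ᶠ p in 𝓝 ((0 : 𝕜), y), H (p.1, G p) = p.2 := by
  have hG' : IsDeformationOfId G τ :=
    hH.of_leftInverse hG ((hinv.mono fun _ h => h.2).curry_nhds.self_of_nhds)
  filter_upwards [hH.eventually, hG'.eventually,
    (hinv.mono fun _ h => h.1).eventually_nhds.curry_nhds.self_of_nhds] with y hHy hGy hinvy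
  exact ⟨hHy, hGy, hinvy⟩

end IsDeformationOfId

variable {H₁ H₂ G₁ G₂ : 𝕜 × 𝕜 → 𝕜}

theorem paramDeriv_one_commutator (hH₁ : IsDeformationOfId H₁ τ) (hH₂ : IsDeformationOfId H₂ τ)
    (hG₁ : IsDeformationOfId G₁ τ) (hG₂ : IsDeformationOfId G₂ τ)
    (hinv₁ : ∀ᶠ p in 𝓝 ((0 : 𝕜), τ), H₁ (p.1, G₁ p) = p.2)
    (hinv₂ : ∀ᶠ p in 𝓝 ((0 : 𝕜), τ), H₂ (p.1, G₂ p) = p.2) :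
    paramDeriv 1 (fiberwiseComp H₁ (fiberwiseComp H₂ (fiberwiseComp G₁ G₂))) τ = 0 := by
  rw [hH₁.paramDeriv_one_comp (hH₂.comp (hG₁.comp hG₂)), hH₂.paramDeriv_one_comp (hG₁.comp hG₂),
    hG₁.paramDeriv_one_comp hG₂, hH₁.paramDeriv_one_eq_neg_of_inverse hG₁ hinv₁,
    hH₂.paramDeriv_one_eq_neg_of_inverse hG₂ hinv₂]
  ring

theorem paramDeriv_two_commutator (hH₁ : IsDeformationOfId H₁ τ) (hH₂ : IsDeformationOfId H₂ τ)
    (hG₁ : IsDeformationOfId G₁ τ) (hG₂ : IsDeformationOfId G₂ τ)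
    (hinv₁ : ∀ᶠ p in 𝓝 ((0 : 𝕜), τ), H₁ (p.1, G₁ p) = p.2)
    (hinv₂ : ∀ᶠ p in 𝓝 ((0 : 𝕜), τ), H₂ (p.1, G₂ p) = p.2) :
    paramDeriv 2 (fiberwiseComp H₁ (fiberwiseComp H₂ (fiberwiseComp G₁ G₂))) τ =
      2 * (deriv (paramDeriv 1 H₁) τ * paramDeriv 1 H₂ τ
        - deriv (paramDeriv 1 H₂) τ * paramDeriv 1 H₁ τ) := by
  rw [hH₁.paramDeriv_two_comp (hH₂.comp (hG₁.comp hG₂)), hH₂.paramDeriv_two_comp (hG₁.comp hG₂),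
    hG₁.paramDeriv_two_comp hG₂, hH₂.paramDeriv_one_comp (hG₁.comp hG₂),
    hG₁.paramDeriv_one_comp hG₂, hH₁.deriv_paramDeriv_one_eq_neg_of_inverse hG₁ hinv₁,
    hH₁.paramDeriv_two_eq_of_inverse hG₁ hinv₁, hH₂.paramDeriv_two_eq_of_inverse hG₂ hinv₂,
    hH₁.paramDeriv_one_eq_neg_of_inverse hG₁ hinv₁, hH₂.paramDeriv_one_eq_neg_of_inverse hG₂ hinv₂]
  ring

end Deformations

/-- Formula (4mar06): the holonomy along the commutator loop is tangent to the
identity to first order in `ε`, and its second Melnikov function is the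
Wronskian-type determinant of the first Melnikov functions of the two holonomies. -/
theorem commutator_melnikov
    (t₀ : ℂ) (H₁ H₂ G₁ G₂ : ℂ × ℂ → ℂ)
    (U : Set (ℂ × ℂ)) (hU : U ∈ nhds ((0 : ℂ), t₀))
    (hH₁ : AnalyticOnNhd ℂ H₁ U) (hH₂ : AnalyticOnNhd ℂ H₂ U)
    (hG₁ : AnalyticOnNhd ℂ G₁ U) (hG₂ : AnalyticOnNhd ℂ G₂ U)
    (hH₁0 : ∀ᶠ t in nhds t₀, H₁ (0, t) = t)
    (hH₂0 : ∀ᶠ t in nhds t₀, H₂ (0, t) = t)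
    (hinv₁ : ∀ᶠ p : ℂ × ℂ in nhds ((0 : ℂ), t₀),
      H₁ (p.1, G₁ (p.1, p.2)) = p.2 ∧ G₁ (p.1, H₁ (p.1, p.2)) = p.2)
    (hinv₂ : ∀ᶠ p : ℂ × ℂ in nhds ((0 : ℂ), t₀),
      H₂ (p.1, G₂ (p.1, p.2)) = p.2 ∧ G₂ (p.1, H₂ (p.1, p.2)) = p.2)
    (A₁ A₂ : ℂ → ℂ)
    (hA₁ : ∀ t : ℂ, A₁ t = deriv (fun ε : ℂ => H₁ (ε, t)) 0)
    (hA₂ : ∀ t : ℂ, A₂ t = deriv (fun ε : ℂ => H₂ (ε, t)) 0)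
    (K : ℂ × ℂ → ℂ)
    (hK : ∀ ε t : ℂ, K (ε, t) = H₁ (ε, H₂ (ε, G₁ (ε, G₂ (ε, t))))) :
    ∀ᶠ t in nhds t₀,
      K (0, t) = t ∧
      deriv (fun ε : ℂ => K (ε, t)) 0 = 0 ∧
      iteratedDeriv 2 (fun ε : ℂ => K (ε, t)) 0 =
        2 * (deriv A₁ t * A₂ t - deriv A₂ t * A₁ t) := by
  obtain rfl : K = fiberwiseComp H₁ (fiberwiseComp H₂ (fiberwiseComp G₁ G₂)) :=
    funext fun p => hK p.1 p.2
  obtain rfl : A₁ = paramDeriv 1 H₁ := funext fun t => (hA₁ t).trans (paramDeriv_one H₁ t).symm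
  obtain rfl : A₂ = paramDeriv 1 H₂ := funext fun t => (hA₂ t).trans (paramDeriv_one H₂ t).symm
  have h₀ : ((0 : ℂ), t₀) ∈ U := mem_of_mem_nhds hU
  filter_upwards [IsDeformationOfId.eventually_of_inverse ⟨hH₁ _ h₀, hH₁0⟩ (hG₁ _ h₀) hinv₁,
    IsDeformationOfId.eventually_of_inverse ⟨hH₂ _ h₀, hH₂0⟩ (hG₂ _ h₀) hinv₂]
    with t ⟨hH₁t, hG₁t, hinv₁t⟩ ⟨hH₂t, hG₂t, hinv₂t⟩
  refine ⟨(hH₁t.comp (hH₂t.comp (hG₁t.comp hG₂t))).apply_zero, ?_,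
    paramDeriv_two_commutator hH₁t hH₂t hG₁t hG₂t hinv₁t hinv₂t⟩
  rw [← paramDeriv_one]
  exact paramDeriv_one_commutator hH₁t hH₂t hG₁t hG₂t hinv₁t hinv₂t
end
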